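/- Let E be a real normed space and K ⊆ E a nontrivial cone with norm-base B_K. Then the algebraic interior of the augmented dual cone satisfies cor K^{a+} = {(x*, α) ∈ E* × ℝ | x* ∈ K⁺, α > 0, and sInf {x*(x) | x ∈ B_K} > α}, and this set is contained in {(x*, α) ∈ K^{a#} | α > 0}. -/

import Mathlib

open Set

variable {E : Type*} [NormedAddCommGroup E] [NormedSpace ℝ E]

/-- `K` is a cone: contains `0` and is closed under nonnegative scalar multiplication. -/
def IsCone (K : Set E) : Prop :=
  (0 : E) ∈ K ∧ ∀ t : ℝ, 0 ≤ t → ∀ x ∈ K, t • x ∈ K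

/-- A cone is nontrivial if it is neither `{0}` nor the whole space. -/
def IsNontrivialCone (K : Set E) : Prop :=
  IsCone K ∧ K ≠ {0} ∧ K ≠ Set.univ

/-- The norm-base of a cone: its intersection with the unit sphere. -/
def normBase (K : Set E) : Set E := {x ∈ K | ‖x‖ = 1}

/-- Closure of a set with respect to the weak topology `σ(E, E*)`. -/
noncomputable def wClosure (S : Set E) : Set E :=
  (toWeakSpace ℝ E).symm '' closure ((toWeakSpace ℝ E) '' S)

/-- A set is weakly compact if it is compact in the weak topology `σ(E, E*)`. -/
def WeaklyCompact (S : Set E) : Prop :=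
  IsCompact ((toWeakSpace ℝ E) '' S)

/-- A set is weakly closed if it equals its weak closure. -/
noncomputable def WeaklyClosed (S : Set E) : Prop :=
  wClosure S = S

/-- The (topological) dual cone `K⁺`. -/
def dualCone (K : Set E) : Set (E →L[ℝ] ℝ) :=
  {f | ∀ k ∈ K, 0 ≤ f k}

/-- The set `K^#` of functionals strictly positive on `K \ {0}`. -/
def sharpCone (K : Set E) : Set (E →L[ℝ] ℝ) :=
  {f | ∀ k ∈ K, k ≠ 0 → 0 < f k}

/-- The set `K^{w#}` of functionals strictly positive on the weak closure of the norm-base. -/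
noncomputable def wSharpCone (K : Set E) : Set (E →L[ℝ] ℝ) :=
  {f | ∀ x ∈ wClosure (normBase K), 0 < f x}

/-- The algebraic interior (core) of a set in a real vector space. -/
def core {X : Type*} [AddCommGroup X] [Module ℝ X] (Ω : Set X) : Set X :=
  {x ∈ Ω | ∀ v : X, ∃ ε > 0, ∀ t ∈ Set.Icc (0 : ℝ) ε, x + t • v ∈ Ω}

/-- The augmented dual cone `K^{a+}`. -/
def augDualCone (K : Set E) : Set ((E →L[ℝ] ℝ) × ℝ) :=
  {p | 0 ≤ p.2 ∧ ∀ y ∈ K, 0 ≤ p.1 y - p.2 * ‖y‖}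

/-- The set `K^{a#}`. -/
def augSharpCone (K : Set E) : Set ((E →L[ℝ] ℝ) × ℝ) :=
  {p | 0 ≤ p.2 ∧ p.1 ∈ sharpCone K ∧ ∀ y ∈ K, y ≠ 0 → 0 < p.1 y - p.2 * ‖y‖}

/-- The set `K^{aw#}`. -/
noncomputable def augWSharpCone (K : Set E) : Set ((E →L[ℝ] ℝ) × ℝ) :=
  {p | 0 ≤ p.2 ∧ p.1 ∈ sharpCone K ∧ ∀ y ∈ wClosure (normBase K), p.2 < p.1 y}

/-- `S_C = conv(B_C)`. -/
noncomputable def convBase (C : Set E) : Set E := convexHull ℝ (normBase C)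

/-- `S_C^0 = conv({0} ∪ B_C)`. -/
noncomputable def convBase0 (C : Set E) : Set E := convexHull ℝ ({0} ∪ normBase C)

/-! By homogeneity, `(x*, α) ∈ K^{a+}` iff `α ≥ 0` and `x* ≥ α` on `B_K`. Moving from a core point
in the directions `(0, ∓1)` therefore forces `α > 0` and `x* ≥ α + ε` on `B_K`. Conversely, if
`α < m := inf x*(B_K)`, moving by `t • (g, β)` changes `α` and `x* - α` on `B_K` by at most
`t (‖g‖ + |β|)`, which stays below `min (m - α) α` for small `t ≥ 0`. -/

section

variable {K : Set E}

lemma IsCone.inv_norm_smul_mem_normBase (hK : IsCone K) {y : E} (hy : y ∈ K) (hy0 : y ≠ 0) :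
    ‖y‖⁻¹ • y ∈ normBase K :=
  ⟨hK.2 _ (inv_nonneg.2 (norm_nonneg y)) y hy, norm_smul_inv_norm (𝕜 := ℝ) hy0⟩

lemma IsNontrivialCone.normBase_nonempty (hK : IsNontrivialCone K) : (normBase K).Nonempty := by
  obtain ⟨y, hy, hy0⟩ : ∃ y ∈ K, y ≠ 0 := by
    by_contra! h
    exact hK.2.1 (eq_singleton_iff_unique_mem.2 ⟨hK.1.1, h⟩)
  exact ⟨_, hK.1.inv_norm_smul_mem_normBase hy hy0⟩

lemma apply_eq_norm_mul_apply_inv_norm_smul (f : E →L[ℝ] ℝ) {y : E} (hy0 : y ≠ 0) :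
    f y = ‖y‖ * f (‖y‖⁻¹ • y) := by
  rw [map_smul, smul_eq_mul, mul_inv_cancel_left₀ (norm_ne_zero_iff.2 hy0)]

lemma IsCone.mul_norm_le_of_forall_normBase_le (hK : IsCone K) {f : E →L[ℝ] ℝ} {α : ℝ}
    (h : ∀ x ∈ normBase K, α ≤ f x) {y : E} (hy : y ∈ K) : α * ‖y‖ ≤ f y := by
  rcases eq_or_ne y 0 with rfl | hy0
  · simp
  rw [apply_eq_norm_mul_apply_inv_norm_smul f hy0, mul_comm α]
  exact mul_le_mul_of_nonneg_left (h _ (hK.inv_norm_smul_mem_normBase hy hy0)) (norm_nonneg y)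

lemma IsCone.mul_norm_lt_of_forall_normBase_lt (hK : IsCone K) {f : E →L[ℝ] ℝ} {α : ℝ}
    (h : ∀ x ∈ normBase K, α < f x) {y : E} (hy : y ∈ K) (hy0 : y ≠ 0) : α * ‖y‖ < f y := by
  rw [apply_eq_norm_mul_apply_inv_norm_smul f hy0, mul_comm α]
  exact mul_lt_mul_of_pos_left (h _ (hK.inv_norm_smul_mem_normBase hy hy0)) (norm_pos_iff.2 hy0)

lemma IsCone.mem_augDualCone_iff (hK : IsCone K) {f : E →L[ℝ] ℝ} {α : ℝ} :
    (f, α) ∈ augDualCone K ↔ 0 ≤ α ∧ ∀ x ∈ normBase K, α ≤ f x := by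
  simp only [augDualCone, mem_ofPred_eq, sub_nonneg]
  refine and_congr_right fun _ => ⟨fun h x hx => ?_, fun h y hy => ?_⟩
  · simpa [hx.2] using h x hx.1
  · exact hK.mul_norm_le_of_forall_normBase_le h hy

lemma sInf_image_normBase_le {f : E →L[ℝ] ℝ} (hf : f ∈ dualCone K) {x : E}
    (hx : x ∈ normBase K) : sInf (f '' normBase K) ≤ f x :=
  csInf_le ⟨0, forall_mem_image.2 fun y hy => hf y hy.1⟩ (mem_image_of_mem _ hx)

lemma exists_pos_forall_mul_le {δ : ℝ} (hδ : 0 < δ) (c : ℝ) :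
    ∃ ε > 0, ∀ t ∈ Icc 0 ε, t * c ≤ δ := by
  refine ⟨δ / (|c| + 1), by positivity, fun t ⟨ht0, htε⟩ => ?_⟩
  rw [le_div_iff₀ (by positivity)] at htε
  nlinarith [le_abs_self c]

lemma core_augDualCone_subset (hK : IsCone K) (hB : (normBase K).Nonempty) :
    core (augDualCone K) ⊆
      {p | p.1 ∈ dualCone K ∧ 0 < p.2 ∧ p.2 < sInf (p.1 '' normBase K)} := by
  rintro ⟨f, α⟩ ⟨hmem, hcore⟩
  obtain ⟨hα, hfα⟩ := hK.mem_augDualCone_iff.1 hmem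
  obtain ⟨ε₁, hε₁, h₁⟩ := hcore (0, -1)
  obtain ⟨ε₂, hε₂, h₂⟩ := hcore (0, 1)
  have hdown : (f, α - ε₁) ∈ augDualCone K := by
    simpa [sub_eq_add_neg] using h₁ ε₁ ⟨hε₁.le, le_rfl⟩
  have hup : (f, α + ε₂) ∈ augDualCone K := by simpa using h₂ ε₂ ⟨hε₂.le, le_rfl⟩
  refine ⟨fun y hy => ?_, by linarith [(hK.mem_augDualCone_iff.1 hdown).1], ?_⟩
  · exact (mul_nonneg hα (norm_nonneg y)).trans (hK.mul_norm_le_of_forall_normBase_le hfα hy)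
  · exact (lt_add_of_pos_right α hε₂).trans_le
      (le_csInf (hB.image _) (forall_mem_image.2 (hK.mem_augDualCone_iff.1 hup).2))

lemma subset_core_augDualCone (hK : IsCone K) :
    {p : (E →L[ℝ] ℝ) × ℝ | p.1 ∈ dualCone K ∧ 0 < p.2 ∧ p.2 < sInf (p.1 '' normBase K)} ⊆
      core (augDualCone K) := by
  rintro ⟨f, α⟩ ⟨hf, hα, hαm⟩
  dsimp only at hf hα hαm
  set m := sInf (f '' normBase K)
  have hm : ∀ x ∈ normBase K, m ≤ f x := fun x hx => sInf_image_normBase_le hf hx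
  refine ⟨hK.mem_augDualCone_iff.2 ⟨hα.le, fun x hx => (hαm.trans_le (hm x hx)).le⟩, ?_⟩
  rintro ⟨g, β⟩
  obtain ⟨ε, hε, hεt⟩ := exists_pos_forall_mul_le (lt_min (sub_pos.2 hαm) hα) (‖g‖ + |β|)
  refine ⟨ε, hε, fun t ht => ?_⟩
  have htm := (hεt t ht).trans (min_le_left _ _)
  have htα := (hεt t ht).trans (min_le_right _ _)
  obtain ⟨htβ, htβ'⟩ : -(t * |β|) ≤ t * β ∧ t * β ≤ t * |β| := by
    rw [← abs_le, abs_mul, abs_of_nonneg ht.1]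
  have htg : 0 ≤ t * ‖g‖ := mul_nonneg ht.1 (norm_nonneg g)
  rw [show (f, α) + t • (g, β) = (f + t • g, α + t * β) from rfl, hK.mem_augDualCone_iff]
  refine ⟨by linarith, fun x hx => ?_⟩
  have hgx : -(t * ‖g‖) ≤ t * g x := by
    have := g.le_opNorm x
    rw [hx.2, mul_one] at this
    simpa using mul_le_mul_of_nonneg_left (neg_le_of_abs_le this) ht.1
  rw [add_apply, smul_apply, smul_eq_mul]
  linarith [hm x hx]

lemma setOf_lt_sInf_subset_augSharpCone (hK : IsCone K) :
    {p : (E →L[ℝ] ℝ) × ℝ | p.1 ∈ dualCone K ∧ 0 < p.2 ∧ p.2 < sInf (p.1 '' normBase K)} ⊆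
      {p ∈ augSharpCone K | 0 < p.2} := by
  rintro ⟨f, α⟩ ⟨hf, hα, hαm⟩
  have hlt : ∀ x ∈ normBase K, α < f x := fun x hx => hαm.trans_le (sInf_image_normBase_le hf hx)
  have hstrict : ∀ y ∈ K, y ≠ 0 → α * ‖y‖ < f y := fun y hy hy0 =>
    hK.mul_norm_lt_of_forall_normBase_lt hlt hy hy0
  refine ⟨⟨hα.le, fun y hy hy0 => ?_, fun y hy hy0 => sub_pos.2 (hstrict y hy hy0)⟩, hα⟩
  exact (mul_pos hα (norm_pos_iff.2 hy0)).trans (hstrict y hy hy0)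

end

theorem stmt10 (K : Set E) (hK : IsNontrivialCone K) :
    core (augDualCone K) =
      {p : (E →L[ℝ] ℝ) × ℝ | p.1 ∈ dualCone K ∧ 0 < p.2 ∧
        p.2 < sInf ((fun x => p.1 x) '' normBase K)} ∧
    core (augDualCone K) ⊆ {p ∈ augSharpCone K | 0 < p.2} := by
  have hcore := (core_augDualCone_subset hK.1 hK.normBase_nonempty).antisymm
    (subset_core_augDualCone hK.1)
  exact ⟨hcore, hcore ▸ setOf_lt_sInf_subset_augSharpCone hK.1⟩
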